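/- Let f : ℝ → ℝ be C¹ and concave, and let y₁ ≤ ⋯ ≤ yₙ. Suppose x₁,…,xₙ satisfy x₁ + ⋯ + xₖ ≤ y₁ + ⋯ + yₖ for k = 1,…,n−1, and x₁ + ⋯ + xₙ = y₁ + ⋯ + yₙ. Then f(x₁) + ⋯ + f(xₙ) ≤ f(y₁) + ⋯ + f(yₙ). -/

import Mathlib

/-!
Take `c i` to be the right derivative of `f` at `y i`, a supergradient: concavity gives
`f (x i) ≤ f (y i) + c i * (x i - y i)`. Since `y` increases, `c` decreases, and Abel summation
writes `∑ c i * (x i - y i)` as a sum of products of `c (i + 1) - c i ≤ 0` with the partial sums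
of `x - y`, which are `≤ 0` and vanish at `n`; so this correction term is `≤ 0`.
-/

open Finset Set

section AbelInequality

variable {R : Type*} [CommRing R] [LinearOrder R] [IsStrictOrderedRing R]

theorem sum_range_mul_le_sum_range_mul_of_partialSums_le {n : ℕ} {c x y : ℕ → R}
    (hc : ∀ i, i + 1 < n → c (i + 1) ≤ c i)
    (hpartial : ∀ k < n, ∑ i ∈ range k, x i ≤ ∑ i ∈ range k, y i)
    (htot : ∑ i ∈ range n, x i = ∑ i ∈ range n, y i) :
    ∑ i ∈ range n, c i * x i ≤ ∑ i ∈ range n, c i * y i := by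
  suffices ∑ i ∈ range n, c i • (x - y) i ≤ 0 by
    simpa [mul_sub, smul_eq_mul, sum_sub_distrib] using this
  have hterm : ∀ i ∈ range (n - 1), 0 ≤ (c (i + 1) - c i) • ∑ j ∈ range (i + 1), (x - y) j := by
    intro i hi
    have hin : i + 1 < n := by rw [Finset.mem_range] at hi; omega
    simp only [Pi.sub_apply, sum_sub_distrib, smul_eq_mul]
    exact mul_nonneg_of_nonpos_of_nonpos (sub_nonpos.2 (hc i hin))
      (sub_nonpos.2 (hpartial (i + 1) hin))
  rw [sum_range_by_parts, Pi.sub_def, sum_sub_distrib, htot, sub_self, smul_zero, zero_sub,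
    neg_nonpos]
  exact sum_nonneg hterm

end AbelInequality

namespace ConcaveOn

variable {S : Set ℝ} {f : ℝ → ℝ}

theorem le_add_rightDeriv_mul_sub (hf : ConcaveOn ℝ S f) {a b : ℝ} (ha : a ∈ S)
    (hb : b ∈ interior S) : f a ≤ f b + derivWithin f (Ioi b) b * (a - b) := by
  have hneg : ConvexOn ℝ S (-f) := hf.neg
  have hd : derivWithin (-f) (Ioi b) b = -derivWithin f (Ioi b) b := derivWithin.neg
  rcases lt_trichotomy a b with hab | rfl | hab
  · have h := (hneg.slope_le_leftDeriv_of_mem_interior ha hb hab).trans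
      (hneg.leftDeriv_le_rightDeriv_of_mem_interior hb)
    rw [hd, slope_def_field, div_le_iff₀ (sub_pos.2 hab)] at h
    simp only [Pi.neg_apply] at h
    linarith
  · simp
  · have h := hneg.rightDeriv_le_slope_of_mem_interior hb ha hab
    rw [hd, slope_def_field, le_div_iff₀ (sub_pos.2 hab)] at h
    simp only [Pi.neg_apply] at h
    linarith

theorem antitoneOn_rightDeriv (hf : ConcaveOn ℝ S f) :
    AntitoneOn (fun x ↦ derivWithin f (Ioi x) x) (interior S) := by
  intro a ha b hb hab
  have := hf.neg.monotoneOn_rightDeriv ha hb hab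
  simp only [derivWithin.neg] at this
  exact neg_le_neg_iff.1 this

end ConcaveOn

theorem concave_majorization (f : ℝ → ℝ)
    (hconc : ConcaveOn ℝ Set.univ f)
    (n : ℕ) (x y : ℕ → ℝ)
    (hymono : ∀ i, i + 1 < n → y i ≤ y (i + 1))
    (hsum : ∀ k, k < n → ∑ i ∈ Finset.range k, x i ≤ ∑ i ∈ Finset.range k, y i)
    (htot : ∑ i ∈ Finset.range n, x i = ∑ i ∈ Finset.range n, y i) :
    ∑ i ∈ Finset.range n, f (x i) ≤ ∑ i ∈ Finset.range n, f (y i) := by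
  set c : ℕ → ℝ := fun i ↦ derivWithin f (Ioi (y i)) (y i)
  have htangent : ∀ i, f (x i) ≤ f (y i) + c i * (x i - y i) := fun i ↦
    hconc.le_add_rightDeriv_mul_sub (mem_univ _) (by simp)
  have hc : ∀ i, i + 1 < n → c (i + 1) ≤ c i := fun i hi ↦
    hconc.antitoneOn_rightDeriv (by simp) (by simp) (hymono i hi)
  have habel := sum_range_mul_le_sum_range_mul_of_partialSums_le hc hsum htot
  calc ∑ i ∈ range n, f (x i)
      ≤ ∑ i ∈ range n, (f (y i) + c i * (x i - y i)) := sum_le_sum fun i _ ↦ htangent i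
    _ = ∑ i ∈ range n, f (y i) + (∑ i ∈ range n, c i * x i - ∑ i ∈ range n, c i * y i) := by
        simp only [mul_sub, sum_add_distrib, sum_sub_distrib]
    _ ≤ ∑ i ∈ range n, f (y i) := by linarith
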